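/- Let H be a complex Hilbert space, α ∈ (1, 2), γ ∈ (0, 1) and M > 0. There exists θ₀ ∈ (π/2, π) such that for every θ ∈ (π/2, θ₀) there is a constant c > 0, depending only on α, γ, θ, M, with the property: for every time step τ > 0, every z ∈ D(τ,θ), writing w = δ_τ(e^{−zτ}) with δ_τ the BDF2 generating symbol, and for all bounded linear operators R₁, R₂ on H satisfying ‖R₁‖ ≤ M|z|^{−α}, ‖R₂‖ ≤ M|z|^{−α} and the resolvent identity R₂ − R₁ = (z^α − w^α) R₂ ∘ R₁, one has ‖R₂ · w^{2−γ} ρ₁(e^{−zτ}) τ² − R₁ · z^{−γ}‖ ≤ c τ² |z|^{2−α−γ}. -/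

import Mathlib

open Complex Set

/-- The BDF2 generating symbol `δ_τ(ξ) = τ⁻¹(3/2 − 2ξ + ξ²/2)`. -/
noncomputable def bdf2 (τ : ℝ) (ξ : ℂ) : ℂ :=
  (τ : ℂ)⁻¹ * (3 / 2 - 2 * ξ + ξ ^ 2 / 2)

/-- The region `D(τ,θ)`: nonzero `z` with either `|arg z| = θ` and `|Im z| ≤ π/τ`,
or `|z| ≤ 1/τ` and `|arg z| ≤ θ`. -/
def Dset (τ θ : ℝ) : Set ℂ :=
  {z : ℂ | z ≠ 0 ∧
    ((|z.arg| = θ ∧ |z.im| ≤ Real.pi / τ) ∨ (‖z‖ ≤ 1 / τ ∧ |z.arg| ≤ θ))}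

/-- Closed form of the generating function `Σ_{n≥1} n ξⁿ`. -/
noncomputable def rho1 (ξ : ℂ) : ℂ := ξ / (1 - ξ) ^ 2

/-!
After the rescaling `ζ = zτ`, the symbol becomes `w = τ⁻¹ δ₁(e^{-ζ})` and, for `θ < 3π/4`, the
region `D(τ,θ)` is carried into a fixed bounded region of the `ζ`-plane. Writing
`b R₂ - y R₁ = (b - y) R₂ + y (R₂ - R₁)` and using the resolvent identity
`‖R₂ - R₁‖ ≤ |z^α - w^α| ‖R₂‖ ‖R₁‖`, the operator estimate reduces to the scalar bounds
`|ζ^α - δ₁(e^{-ζ})^α| ≲ |ζ|^{α+2}` and `|δ₁(e^{-ζ})^{2-γ} ρ₁(e^{-ζ}) - ζ^{-γ}| ≲ |ζ|^{2-γ}`.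
Near `ζ = 0` they follow from `δ₁(e^{-ζ}) = ζ + O(ζ³)` and `ζ² ρ₁(e^{-ζ}) = 1 + O(ζ²)`; away from
the origin every term is bounded by compactness, since `e^{-ζ} ≠ 1` for `ζ ≠ 0` with `|Im ζ| ≤ π`.
-/
namespace Complex

lemma mul_cpow_of_arg_add_mem {x y : ℂ} (hx : x ≠ 0) (hy : y ≠ 0)
    (h : x.arg + y.arg ∈ Ioc (-Real.pi) Real.pi) (s : ℂ) : (x * y) ^ s = x ^ s * y ^ s := by
  rw [cpow_def_of_ne_zero (mul_ne_zero hx hy), cpow_def_of_ne_zero hx, cpow_def_of_ne_zero hy,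
    log_mul hx hy h, add_mul, exp_add]

lemma ofReal_mul_cpow {r : ℝ} (hr : 0 < r) (u s : ℂ) :
    ((r : ℂ) * u) ^ s = (r : ℂ) ^ s * u ^ s := by
  rcases eq_or_ne u 0 with rfl | hu
  · rcases eq_or_ne s 0 with rfl | hs
    · simp
    · simp [zero_cpow hs]
  have hr' : (r : ℂ) ≠ 0 := ofReal_ne_zero.mpr hr.ne'
  rw [cpow_def_of_ne_zero (mul_ne_zero hr' hu), cpow_def_of_ne_zero hr', cpow_def_of_ne_zero hu,
    log_ofReal_mul hr hu, ofReal_log hr.le, add_mul, exp_add]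

lemma norm_log_le_of_norm_sub_one_le {u : ℂ} (hu : ‖u - 1‖ ≤ 1 / 2) :
    ‖log u‖ ≤ 3 / 2 * ‖u - 1‖ := by
  simpa using norm_log_one_add_half_le_self hu

lemma abs_arg_le_of_norm_sub_one_le {u : ℂ} (hu : ‖u - 1‖ ≤ 1 / 2) :
    |u.arg| ≤ 3 / 2 * ‖u - 1‖ := by
  rw [← log_im]
  exact (abs_im_le_norm _).trans (norm_log_le_of_norm_sub_one_le hu)

lemma norm_cpow_sub_one_le {u s : ℂ} (hu : ‖u - 1‖ ≤ 1 / 3) (hs : ‖s‖ ≤ 2) :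
    ‖u ^ s - 1‖ ≤ 6 * ‖u - 1‖ := by
  have hu₀ : u ≠ 0 := by
    rintro rfl
    norm_num at hu
  have hlog : ‖log u * s‖ ≤ 3 * ‖u - 1‖ := by
    rw [norm_mul]
    nlinarith [norm_log_le_of_norm_sub_one_le (hu.trans (by norm_num)), norm_nonneg (log u),
      norm_nonneg (u - 1)]
  rw [cpow_def_of_ne_zero hu₀]
  linarith [norm_exp_sub_one_le (hlog.trans (by linarith))]

lemma norm_exp_neg_sub_quadratic_le {ζ : ℂ} (h : ‖ζ‖ ≤ 1) :
    ‖exp (-ζ) - (1 - ζ + ζ ^ 2 / 2)‖ ≤ ‖ζ‖ ^ 3 := by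
  have H := exp_bound (x := -ζ) (by rwa [norm_neg]) (n := 3) (by norm_num)
  simp only [Finset.sum_range_succ, Finset.sum_range_zero, norm_neg] at H
  norm_num [Nat.factorial] at H
  have e : 1 - ζ + ζ ^ 2 / 2 = 1 + -ζ + ζ ^ 2 / 2 := by ring
  rw [e]
  nlinarith [pow_nonneg (norm_nonneg ζ) 3]

end Complex

noncomputable def bdf2Exp (ζ : ℂ) : ℂ := bdf2 1 (exp (-ζ))

lemma bdf2_exp_neg_mul {τ : ℝ} (z : ℂ) : bdf2 τ (exp (-z * τ)) = (τ : ℂ)⁻¹ * bdf2Exp (z * τ) := by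
  simp [bdf2Exp, bdf2, neg_mul]

section NearOrigin

variable {ζ : ℂ}

lemma norm_bdf2Exp_sub_self_le (h : ‖ζ‖ ≤ 1 / 2) : ‖bdf2Exp ζ - ζ‖ ≤ 6 * ‖ζ‖ ^ 3 := by
  set E₁ := exp (-ζ) - (1 - ζ + ζ ^ 2 / 2)
  set E₂ := exp (-(2 * ζ)) - (1 - 2 * ζ + (2 * ζ) ^ 2 / 2)
  have hE₁ : ‖E₁‖ ≤ ‖ζ‖ ^ 3 := norm_exp_neg_sub_quadratic_le (by linarith)
  have hE₂ : ‖E₂‖ ≤ (2 * ‖ζ‖) ^ 3 := by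
    simpa using norm_exp_neg_sub_quadratic_le (ζ := 2 * ζ) (by simp; linarith)
  have hsq : exp (-ζ) ^ 2 = exp (-(2 * ζ)) := by rw [← exp_nat_mul]; ring_nf
  have key : bdf2Exp ζ - ζ = -2 * E₁ + E₂ / 2 := by
    simp only [bdf2Exp, bdf2, ofReal_one, inv_one, one_mul, E₁, E₂]
    linear_combination (1 / 2 : ℂ) * hsq
  calc ‖bdf2Exp ζ - ζ‖ ≤ 2 * ‖E₁‖ + ‖E₂‖ / 2 := by
        rw [key]; refine (norm_add_le _ _).trans_eq ?_; simp
    _ ≤ 6 * ‖ζ‖ ^ 3 := by linarith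

lemma norm_bdf2Exp_div_sub_one_le (hζ : ζ ≠ 0) (h : ‖ζ‖ ≤ 1 / 2) :
    ‖bdf2Exp ζ / ζ - 1‖ ≤ 6 * ‖ζ‖ ^ 2 := by
  have hpos : 0 < ‖ζ‖ := norm_pos_iff.mpr hζ
  rw [div_sub_one hζ, norm_div, div_le_iff₀ hpos]
  linarith [norm_bdf2Exp_sub_self_le h]

lemma half_norm_le_norm_one_sub_exp_neg (h : ‖ζ‖ ≤ 1 / 5) : ‖ζ‖ / 2 ≤ ‖1 - exp (-ζ)‖ := by
  have hE := norm_exp_neg_sub_quadratic_le (ζ := ζ) (by linarith)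
  have key : 1 - exp (-ζ) = ζ - (ζ ^ 2 / 2 + (exp (-ζ) - (1 - ζ + ζ ^ 2 / 2))) := by ring
  have hle : ‖ζ ^ 2 / 2 + (exp (-ζ) - (1 - ζ + ζ ^ 2 / 2))‖ ≤ ‖ζ‖ ^ 2 / 2 + ‖ζ‖ ^ 3 :=
    (norm_add_le _ _).trans (by simp; linarith)
  rw [key]
  nlinarith [norm_sub_norm_le ζ (ζ ^ 2 / 2 + (exp (-ζ) - (1 - ζ + ζ ^ 2 / 2))), norm_nonneg ζ]

lemma norm_sq_mul_rho1_exp_neg_sub_one_le (hζ : ζ ≠ 0) (h : ‖ζ‖ ≤ 1 / 5) :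
    ‖ζ ^ 2 * rho1 (exp (-ζ)) - 1‖ ≤ 12 * ‖ζ‖ ^ 2 := by
  have hpos : 0 < ‖ζ‖ := norm_pos_iff.mpr hζ
  have hden := half_norm_le_norm_one_sub_exp_neg h
  have hden₀ : 1 - exp (-ζ) ≠ 0 := norm_pos_iff.mp (by linarith)
  set E := exp (-ζ) - (1 - ζ + ζ ^ 2 / 2)
  have hE : ‖E‖ ≤ ‖ζ‖ ^ 3 := norm_exp_neg_sub_quadratic_le (by linarith)
  -- the numerator `ζ² e^{-ζ} - (1 - e^{-ζ})²` is `O(ζ⁴)`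
  have key : ζ ^ 2 * rho1 (exp (-ζ)) - 1 =
      (ζ ^ 4 / 4 + 2 * ζ * E - E ^ 2) / (1 - exp (-ζ)) ^ 2 := by
    rw [rho1, eq_div_iff (pow_ne_zero 2 hden₀)]
    field_simp
    ring
  have hnum : ‖ζ ^ 4 / 4 + 2 * ζ * E - E ^ 2‖ ≤ 3 * ‖ζ‖ ^ 4 := by
    have h₁ : ‖ζ ^ 4 / 4 + 2 * ζ * E - E ^ 2‖ ≤ ‖ζ‖ ^ 4 / 4 + 2 * ‖ζ‖ * ‖E‖ + ‖E‖ ^ 2 :=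
      calc _ ≤ ‖ζ ^ 4 / 4 + 2 * ζ * E‖ + ‖E ^ 2‖ := norm_sub_le _ _
        _ ≤ ‖ζ ^ 4 / 4‖ + ‖2 * ζ * E‖ + ‖E ^ 2‖ := by gcongr; exact norm_add_le _ _
        _ = _ := by rw [norm_div, norm_mul, norm_mul, norm_pow, norm_pow]; norm_num
    have h₂ : ‖ζ‖ * ‖E‖ ≤ ‖ζ‖ ^ 4 := by
      simpa [pow_succ'] using mul_le_mul_of_nonneg_left hE (norm_nonneg ζ)
    have h₃ : ‖E‖ ^ 2 ≤ ‖ζ‖ ^ 4 / 25 := by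
      have := pow_le_pow_left₀ (norm_nonneg E) hE 2
      have : ‖ζ‖ ^ 2 ≤ 1 / 25 := by nlinarith
      nlinarith [pow_nonneg (norm_nonneg ζ) 4]
    nlinarith
  rw [key, norm_div, norm_pow, div_le_iff₀ (by positivity)]
  nlinarith [pow_le_pow_left₀ (by positivity) hden 2]

lemma norm_bdf2Exp_div_sub_one_le_of_norm_le_fifth (hζ : ζ ≠ 0) (h : ‖ζ‖ ≤ 1 / 5) :
    ‖bdf2Exp ζ / ζ - 1‖ ≤ 6 / 25 :=
  (norm_bdf2Exp_div_sub_one_le hζ (by linarith)).trans (by nlinarith [norm_nonneg ζ])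

lemma norm_bdf2Exp_div_cpow_sub_one_le {s : ℝ} (hs : |s| ≤ 2) (hζ : ζ ≠ 0) (h : ‖ζ‖ ≤ 1 / 5) :
    ‖(bdf2Exp ζ / ζ) ^ (s : ℂ) - 1‖ ≤ 36 * ‖ζ‖ ^ 2 := by
  have := norm_cpow_sub_one_le (s := s) ((norm_bdf2Exp_div_sub_one_le_of_norm_le_fifth hζ h).trans
    (by norm_num)) (by rwa [norm_real, Real.norm_eq_abs])
  linarith [norm_bdf2Exp_div_sub_one_le hζ (by linarith)]

lemma bdf2Exp_cpow_eq_mul (hζ : ζ ≠ 0) (h : ‖ζ‖ ≤ 1 / 5) (harg : |ζ.arg| ≤ 3 * Real.pi / 4)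
    (s : ℂ) : bdf2Exp ζ ^ s = ζ ^ s * (bdf2Exp ζ / ζ) ^ s := by
  have hu := norm_bdf2Exp_div_sub_one_le_of_norm_le_fifth hζ h
  have hu₀ : bdf2Exp ζ / ζ ≠ 0 := by
    intro h₀
    norm_num [h₀] at hu
  have hargu := abs_arg_le_of_norm_sub_one_le (hu.trans (by norm_num))
  rw [← mul_cpow_of_arg_add_mem hζ hu₀ _ s, mul_div_cancel₀ _ hζ]
  have := Real.pi_gt_three
  constructor <;> linarith [abs_le.mp harg, abs_le.mp hargu]

lemma norm_cpow_sub_bdf2Exp_cpow_le_of_near {s : ℝ} (hs : |s| ≤ 2) (hζ : ζ ≠ 0)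
    (h : ‖ζ‖ ≤ 1 / 5) (harg : |ζ.arg| ≤ 3 * Real.pi / 4) :
    ‖ζ ^ (s : ℂ) - bdf2Exp ζ ^ (s : ℂ)‖ ≤ 36 * ‖ζ‖ ^ (s + 2) := by
  have hpos : 0 < ‖ζ‖ := norm_pos_iff.mpr hζ
  rw [bdf2Exp_cpow_eq_mul hζ h harg, ← mul_one_sub, norm_mul, norm_cpow_real, norm_sub_rev,
    Real.rpow_add hpos, Real.rpow_two]
  nlinarith [norm_bdf2Exp_div_cpow_sub_one_le hs hζ h, Real.rpow_pos_of_pos hpos s]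

lemma norm_bdf2Exp_cpow_mul_rho1_sub_le_of_near {s : ℝ} (hs : |s| ≤ 2) (hζ : ζ ≠ 0)
    (h : ‖ζ‖ ≤ 1 / 5) (harg : |ζ.arg| ≤ 3 * Real.pi / 4) :
    ‖bdf2Exp ζ ^ (s : ℂ) * rho1 (exp (-ζ)) - ζ ^ ((s : ℂ) - 2)‖ ≤ 66 * ‖ζ‖ ^ s := by
  have hpos : 0 < ‖ζ‖ := norm_pos_iff.mpr hζ
  set u := (bdf2Exp ζ / ζ) ^ (s : ℂ)
  set k := ζ ^ 2 * rho1 (exp (-ζ))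
  have hu := norm_bdf2Exp_div_cpow_sub_one_le hs hζ h
  have hk := norm_sq_mul_rho1_exp_neg_sub_one_le hζ h
  have hk₁ : ‖k‖ ≤ 37 / 25 := by
    have := norm_le_norm_sub_add k 1
    rw [norm_one] at this
    nlinarith
  have key : bdf2Exp ζ ^ (s : ℂ) * rho1 (exp (-ζ)) - ζ ^ ((s : ℂ) - 2) =
      ζ ^ ((s - 2 : ℝ) : ℂ) * ((u - 1) * k + (k - 1)) := by
    rw [bdf2Exp_cpow_eq_mul hζ h harg, cpow_sub _ _ hζ, cpow_two]
    push_cast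
    rw [cpow_sub _ _ hζ, cpow_two]
    field_simp
    ring
  have hsum : ‖(u - 1) * k + (k - 1)‖ ≤ 66 * ‖ζ‖ ^ 2 := by
    refine (norm_add_le _ _).trans ?_
    rw [norm_mul]
    nlinarith [norm_nonneg (u - 1), norm_nonneg k]
  rw [key, norm_mul, norm_cpow_real]
  calc ‖ζ‖ ^ (s - 2) * ‖(u - 1) * k + (k - 1)‖ ≤ ‖ζ‖ ^ (s - 2) * (66 * ‖ζ‖ ^ 2) := by gcongr
    _ = 66 * ‖ζ‖ ^ s := by rw [Real.rpow_sub hpos, Real.rpow_two]; field_simp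

end NearOrigin

lemma exp_neg_ne_one {ζ : ℂ} (hζ : ζ ≠ 0) (him : |ζ.im| < 2 * Real.pi) : exp (-ζ) ≠ 1 := by
  rw [Ne, exp_eq_one_iff]
  rintro ⟨n, hn⟩
  have him' : ζ.im = -(2 * Real.pi * n) := by
    simpa [mul_comm] using congrArg im (neg_eq_iff_eq_neg.mp hn)
  have hn₀ : n = 0 := by
    rw [him', abs_neg, abs_mul, abs_of_pos Real.two_pi_pos] at him
    have : |(n : ℝ)| < 1 := by nlinarith [Real.two_pi_pos]
    exact Int.abs_lt_one_iff.mp (by exact_mod_cast this)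
  exact hζ (by simpa [hn₀] using hn)

lemma exists_bound_bdf2Exp_rho1 {r R : ℝ} (hr : 0 < r) :
    ∃ B ≥ 0, ∀ ζ : ℂ, r ≤ ‖ζ‖ → ‖ζ‖ ≤ R → |ζ.im| ≤ Real.pi →
      ‖bdf2Exp ζ‖ ≤ B ∧ ‖rho1 (exp (-ζ))‖ ≤ B := by
  set K : Set ℂ := {ζ | r ≤ ‖ζ‖ ∧ ‖ζ‖ ≤ R ∧ |ζ.im| ≤ Real.pi}
  have hK : IsCompact K := by
    refine (isCompact_closedBall (0 : ℂ) R).of_isClosed_subset ?_ fun ζ hζ ↦ by simpa using hζ.2.1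
    exact (isClosed_le continuous_const continuous_norm).inter
      ((isClosed_le continuous_norm continuous_const).inter
        (isClosed_le (continuous_abs.comp continuous_im) continuous_const))
  have hcont : ContinuousOn (fun ζ ↦ (bdf2Exp ζ, rho1 (exp (-ζ)))) K := by
    intro ζ hζ
    have hζ₀ : ζ ≠ 0 := norm_pos_iff.mp (hr.trans_le hζ.1)
    have hne : (1 - exp (-ζ)) ^ 2 ≠ 0 :=
      pow_ne_zero 2 (sub_ne_zero.mpr (exp_neg_ne_one hζ₀ (by linarith [hζ.2.2, Real.pi_pos])).symm)
    unfold bdf2Exp bdf2 rho1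
    exact ContinuousAt.continuousWithinAt (by fun_prop (disch := exact hne))
  obtain ⟨B, hB⟩ := hK.exists_bound_of_continuousOn hcont
  refine ⟨max B 0, le_max_right _ _, fun ζ h₁ h₂ h₃ ↦ ?_⟩
  have := hB ζ ⟨h₁, h₂, h₃⟩
  rw [Prod.norm_def] at this
  exact ⟨(le_max_left _ _).trans (this.trans (le_max_left _ _)),
    (le_max_right _ _).trans (this.trans (le_max_left _ _))⟩

/-- The opening `3π/4` leaves room `π/4` for `arg (δ₁(e^{-ζ})/ζ)`, so that powers of
`δ₁(e^{-ζ}) = ζ · (δ₁(e^{-ζ})/ζ)` split, and keeps `sin θ ≥ 1/2`, which bounds `|ζ|` on the ray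
part of `D(τ,θ)`. -/
def scaledDomain : Set ℂ :=
  {ζ | ζ ≠ 0 ∧ ‖ζ‖ ≤ 2 * Real.pi ∧ |ζ.im| ≤ Real.pi ∧ |ζ.arg| ≤ 3 * Real.pi / 4}

lemma le_div_rpow_mul_rpow {X r t e : ℝ} (hX : 0 ≤ X) (he : 0 ≤ e) (hr : 0 < r) (ht : r ≤ t) :
    X ≤ X / r ^ e * t ^ e := by
  rw [div_mul_eq_mul_div, le_div_iff₀ (by positivity)]
  exact mul_le_mul_of_nonneg_left (Real.rpow_le_rpow hr.le ht he) hX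

lemma exists_norm_cpow_sub_bdf2Exp_cpow_le {a : ℝ} (ha₀ : 0 ≤ a) (ha₂ : a ≤ 2) :
    ∃ C > 0, ∀ ζ ∈ scaledDomain,
      ‖ζ ^ (a : ℂ) - bdf2Exp ζ ^ (a : ℂ)‖ ≤ C * ‖ζ‖ ^ (a + 2) := by
  obtain ⟨B, hB₀, hB⟩ := exists_bound_bdf2Exp_rho1 (r := 1 / 5) (R := 2 * Real.pi) (by norm_num)
  have hX : 0 ≤ (2 * Real.pi) ^ a + B ^ a := by positivity
  refine ⟨max 36 (((2 * Real.pi) ^ a + B ^ a) / (1 / 5) ^ (a + 2)), by positivity,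
    fun ζ ⟨hζ, hR, him, harg⟩ ↦ ?_⟩
  rcases le_or_gt ‖ζ‖ (1 / 5) with hnear | hfar
  · calc _ ≤ 36 * ‖ζ‖ ^ (a + 2) := norm_cpow_sub_bdf2Exp_cpow_le_of_near
          (abs_le.mpr ⟨by linarith, ha₂⟩) hζ hnear harg
      _ ≤ _ := by gcongr; exact le_max_left _ _
  · calc _ ≤ ‖ζ‖ ^ a + ‖bdf2Exp ζ‖ ^ a := by
          simpa only [norm_cpow_real] using norm_sub_le (ζ ^ (a : ℂ)) (bdf2Exp ζ ^ (a : ℂ))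
      _ ≤ (2 * Real.pi) ^ a + B ^ a := by gcongr; exact (hB ζ hfar.le hR him).1
      _ ≤ ((2 * Real.pi) ^ a + B ^ a) / (1 / 5) ^ (a + 2) * ‖ζ‖ ^ (a + 2) :=
          le_div_rpow_mul_rpow hX (by linarith) (by norm_num) hfar.le
      _ ≤ _ := by gcongr; exact le_max_right _ _

lemma exists_norm_bdf2Exp_cpow_mul_rho1_sub_le {s : ℝ} (hs₀ : 0 ≤ s) (hs₂ : s ≤ 2) :
    ∃ C > 0, ∀ ζ ∈ scaledDomain,
      ‖bdf2Exp ζ ^ (s : ℂ) * rho1 (exp (-ζ)) - ζ ^ ((s : ℂ) - 2)‖ ≤ C * ‖ζ‖ ^ s := by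
  obtain ⟨B, hB₀, hB⟩ := exists_bound_bdf2Exp_rho1 (r := 1 / 5) (R := 2 * Real.pi) (by norm_num)
  have hX : 0 ≤ B ^ s * B + (1 / 5) ^ (s - 2) := by positivity
  refine ⟨max 66 ((B ^ s * B + (1 / 5) ^ (s - 2)) / (1 / 5) ^ s), by positivity,
    fun ζ ⟨hζ, hR, him, harg⟩ ↦ ?_⟩
  rcases le_or_gt ‖ζ‖ (1 / 5) with hnear | hfar
  · calc _ ≤ 66 * ‖ζ‖ ^ s := norm_bdf2Exp_cpow_mul_rho1_sub_le_of_near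
          (abs_le.mpr ⟨by linarith, hs₂⟩) hζ hnear harg
      _ ≤ _ := by gcongr; exact le_max_left _ _
  · obtain ⟨hδ, hρ⟩ := hB ζ hfar.le hR him
    have hcast : (s : ℂ) - 2 = ((s - 2 : ℝ) : ℂ) := by push_cast; ring
    calc _ ≤ ‖bdf2Exp ζ‖ ^ s * ‖rho1 (exp (-ζ))‖ + ‖ζ‖ ^ (s - 2) := by
          simpa only [norm_mul, norm_cpow_real, hcast] using
            norm_sub_le (bdf2Exp ζ ^ (s : ℂ) * rho1 (exp (-ζ))) (ζ ^ ((s : ℂ) - 2))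
      _ ≤ B ^ s * B + (1 / 5) ^ (s - 2) := by
          gcongr ?_ + ?_
          · exact mul_le_mul (Real.rpow_le_rpow (norm_nonneg _) hδ hs₀) hρ (norm_nonneg _)
              (by positivity)
          · exact Real.rpow_le_rpow_of_nonpos (by norm_num) hfar.le (by linarith)
      _ ≤ (B ^ s * B + (1 / 5) ^ (s - 2)) / (1 / 5) ^ s * ‖ζ‖ ^ s :=
          le_div_rpow_mul_rpow hX hs₀ (by norm_num) hfar.le
      _ ≤ _ := by gcongr; exact le_max_right _ _

lemma mul_ofReal_mem_scaledDomain {τ θ : ℝ} (hτ : 0 < τ)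
    (hθ : θ ∈ Ioo (Real.pi / 2) (3 * Real.pi / 4)) {z : ℂ} (hz : z ∈ Dset τ θ) :
    z * τ ∈ scaledDomain := by
  obtain ⟨hz₀, hz⟩ := hz
  have hnorm : ‖z * τ‖ = ‖z‖ * τ := by rw [norm_mul, norm_real, Real.norm_of_nonneg hτ.le]
  have him : |(z * τ).im| = |z.im| * τ := by simp [abs_mul, abs_of_pos hτ]
  have harg : (z * τ).arg = z.arg := arg_mul_real hτ z
  have hπ := Real.pi_pos
  rcases hz with ⟨hθz, himz⟩ | ⟨hnz, hargz⟩
  · have him_le : |(z * τ).im| ≤ Real.pi := by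
      rw [him]; exact (le_div_iff₀ hτ).mp himz
    -- Jordan's inequality at `π - θ ∈ (π/4, π/2)` gives `sin θ ≥ 1/2`
    have hsin : 1 / 2 ≤ Real.sin θ := by
      have := Real.mul_le_sin (x := Real.pi - θ) (by linarith [hθ.2]) (by linarith [hθ.1])
      rw [Real.sin_pi_sub] at this
      have : 2 / Real.pi * (Real.pi - θ) ≥ 1 / 2 := by
        rw [ge_iff_le, div_mul_eq_mul_div, le_div_iff₀ hπ]; linarith [hθ.2]
      linarith
    have hsin_arg : ‖z * τ‖ * Real.sin θ = |(z * τ).im| := by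
      rw [← norm_mul_sin_arg, abs_mul, abs_norm, harg]
      rcases abs_eq (by linarith [hθ.1]) |>.mp hθz with h | h
      · rw [h, abs_of_pos (by linarith)]
      · rw [h, Real.sin_neg, abs_neg, abs_of_pos (by linarith)]
    refine ⟨mul_ne_zero hz₀ (ofReal_ne_zero.mpr hτ.ne'), ?_, him_le, ?_⟩
    · nlinarith [norm_nonneg (z * τ)]
    · rw [harg, hθz]; linarith [hθ.2]
  · have hn : ‖z * τ‖ ≤ 1 := by rw [hnorm]; exact (le_div_iff₀ hτ).mp (by simpa using hnz)
    refine ⟨mul_ne_zero hz₀ (ofReal_ne_zero.mpr hτ.ne'), by linarith [Real.pi_gt_three], ?_, ?_⟩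
    · linarith [abs_im_le_norm (z * τ), Real.pi_gt_three]
    · rw [harg]; linarith [hθ.2]

section Rescaling

variable {τ : ℝ} {z : ℂ}

lemma ofReal_inv_mul_cpow (hτ : 0 < τ) (u : ℂ) (s : ℝ) :
    ((τ : ℂ)⁻¹ * u) ^ (s : ℂ) = ((τ ^ (-s) : ℝ) : ℂ) * u ^ (s : ℂ) := by
  rw [← ofReal_inv, ofReal_mul_cpow (inv_pos.mpr hτ), ← ofReal_cpow (inv_nonneg.mpr hτ.le),
    Real.inv_rpow hτ.le, Real.rpow_neg hτ.le]

lemma cpow_eq_rpow_neg_mul_cpow_mul (hτ : 0 < τ) (s : ℝ) :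
    z ^ (s : ℂ) = ((τ ^ (-s) : ℝ) : ℂ) * (z * τ) ^ (s : ℂ) := by
  rw [← ofReal_inv_mul_cpow hτ, mul_comm z, inv_mul_cancel_left₀ (ofReal_ne_zero.mpr hτ.ne')]

lemma norm_cpow_sub_bdf2_cpow_le {a C : ℝ} (hτ : 0 < τ)
    (h : ‖(z * τ) ^ (a : ℂ) - bdf2Exp (z * τ) ^ (a : ℂ)‖ ≤ C * ‖z * τ‖ ^ (a + 2)) :
    ‖z ^ (a : ℂ) - bdf2 τ (exp (-z * τ)) ^ (a : ℂ)‖ ≤ C * τ ^ 2 * ‖z‖ ^ (a + 2) := by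
  rw [cpow_eq_rpow_neg_mul_cpow_mul hτ, bdf2_exp_neg_mul, ofReal_inv_mul_cpow hτ, ← mul_sub,
    norm_mul, norm_real, Real.norm_of_nonneg (by positivity)]
  rw [norm_mul, norm_real, Real.norm_of_nonneg hτ.le, Real.mul_rpow (norm_nonneg z) hτ.le] at h
  have hτa : τ ^ (-a) * τ ^ (a + 2) = τ ^ 2 := by rw [← Real.rpow_add hτ]; norm_num
  calc _ ≤ τ ^ (-a) * (C * (‖z‖ ^ (a + 2) * τ ^ (a + 2))) := by gcongr
    _ = C * τ ^ 2 * ‖z‖ ^ (a + 2) := by rw [← hτa]; ring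

lemma norm_bdf2_cpow_mul_rho1_sub_le {γ C : ℝ} (hτ : 0 < τ)
    (h : ‖bdf2Exp (z * τ) ^ ((2 - γ : ℝ) : ℂ) * rho1 (exp (-(z * τ))) -
      (z * τ) ^ (((2 - γ : ℝ) : ℂ) - 2)‖ ≤ C * ‖z * τ‖ ^ (2 - γ)) :
    ‖bdf2 τ (exp (-z * τ)) ^ ((2 - γ : ℝ) : ℂ) * rho1 (exp (-z * τ)) * (τ : ℂ) ^ 2 -
      z ^ (-(γ : ℂ))‖ ≤ C * τ ^ 2 * ‖z‖ ^ (2 - γ) := by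
  have hτγ : ((τ ^ (-(2 - γ)) : ℝ) : ℂ) * (τ : ℂ) ^ 2 = ((τ ^ γ : ℝ) : ℂ) := by
    rw [← ofReal_pow, ← ofReal_mul, ← Real.rpow_two, ← Real.rpow_add hτ]
    norm_num
  have hγ : -(γ : ℂ) = ((-γ : ℝ) : ℂ) := by push_cast; ring
  have hexp : ((2 - γ : ℝ) : ℂ) - 2 = ((-γ : ℝ) : ℂ) := by push_cast; ring
  have key : bdf2 τ (exp (-z * τ)) ^ ((2 - γ : ℝ) : ℂ) * rho1 (exp (-z * τ)) * (τ : ℂ) ^ 2 -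
      z ^ (-(γ : ℂ)) = ((τ ^ γ : ℝ) : ℂ) * (bdf2Exp (z * τ) ^ ((2 - γ : ℝ) : ℂ) *
        rho1 (exp (-(z * τ))) - (z * τ) ^ (((2 - γ : ℝ) : ℂ) - 2)) := by
    rw [bdf2_exp_neg_mul, ofReal_inv_mul_cpow hτ, hγ, cpow_eq_rpow_neg_mul_cpow_mul hτ (z := z),
      hexp, neg_neg, ← hτγ, neg_mul]
    ring
  rw [key, norm_mul, norm_real, Real.norm_of_nonneg (by positivity)]
  rw [norm_mul, norm_real, Real.norm_of_nonneg hτ.le, Real.mul_rpow (norm_nonneg z) hτ.le] at h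
  have hτs : τ ^ γ * τ ^ (2 - γ) = τ ^ 2 := by rw [← Real.rpow_add hτ]; norm_num
  calc _ ≤ τ ^ γ * (C * (‖z‖ ^ (2 - γ) * τ ^ (2 - γ))) := by gcongr
    _ = C * τ ^ 2 * ‖z‖ ^ (2 - γ) := by rw [← hτs]; ring

end Rescaling

lemma norm_smul_sub_smul_le_of_resolvent_identity {𝕜 E : Type*} [NontriviallyNormedField 𝕜]
    [NormedAddCommGroup E] [NormedSpace 𝕜 E] {R₁ R₂ : E →L[𝕜] E} {m : ℝ} {b y d : 𝕜}
    (h₁ : ‖R₁‖ ≤ m) (h₂ : ‖R₂‖ ≤ m) (hres : R₂ - R₁ = d • (R₂ ∘L R₁)) :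
    ‖b • R₂ - y • R₁‖ ≤ ‖b - y‖ * m + ‖y‖ * ‖d‖ * m ^ 2 := by
  have hm : 0 ≤ m := (norm_nonneg _).trans h₁
  have hdiff : ‖R₂ - R₁‖ ≤ ‖d‖ * m ^ 2 := by
    rw [hres, norm_smul, sq]
    gcongr
    exact (R₂.opNorm_comp_le R₁).trans (mul_le_mul h₂ h₁ (norm_nonneg _) hm)
  calc ‖b • R₂ - y • R₁‖ = ‖(b - y) • R₂ + y • (R₂ - R₁)‖ := by
        rw [sub_smul, smul_sub]; abel_nf
    _ ≤ ‖b - y‖ * m + ‖y‖ * (‖d‖ * m ^ 2) := by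
        refine (norm_add_le _ _).trans ?_
        rw [norm_smul, norm_smul]
        gcongr
    _ = ‖b - y‖ * m + ‖y‖ * ‖d‖ * m ^ 2 := by ring

theorem bdf2_noise_term_operator_estimate_general
    {H : Type*} [NormedAddCommGroup H] [InnerProductSpace ℂ H]
    (α γ : ℝ) (hα : α ∈ Ioo (1 : ℝ) 2) (hγ : γ ∈ Ioo (0 : ℝ) 1) (M : ℝ) (hM : 0 < M) :
    ∃ θ₀ ∈ Ioo (Real.pi / 2) Real.pi, ∀ θ ∈ Ioo (Real.pi / 2) θ₀,
      ∃ c > (0 : ℝ),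
        ∀ τ : ℝ, 0 < τ → ∀ z ∈ Dset τ θ,
          ∀ R₁ R₂ : H →L[ℂ] H,
            ‖R₁‖ ≤ M * ‖z‖ ^ (-α) →
            ‖R₂‖ ≤ M * ‖z‖ ^ (-α) →
            R₂ - R₁ = (z ^ (α : ℂ) - (bdf2 τ (Complex.exp (-z * τ))) ^ (α : ℂ)) •
              (R₂ ∘L R₁) →
            ‖((bdf2 τ (Complex.exp (-z * τ))) ^ (((2 - γ : ℝ)) : ℂ) *
                  rho1 (Complex.exp (-z * τ)) * (τ : ℂ) ^ 2) • R₂ -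
                (z ^ (-(γ : ℂ))) • R₁‖ ≤
              c * τ ^ 2 * ‖z‖ ^ (2 - α - γ) := by
  obtain ⟨C₁, hC₁, hres⟩ :=
    exists_norm_cpow_sub_bdf2Exp_cpow_le (a := α) (by linarith [hα.1]) hα.2.le
  obtain ⟨C₂, hC₂, hnoise⟩ :=
    exists_norm_bdf2Exp_cpow_mul_rho1_sub_le (s := 2 - γ) (by linarith [hγ.2]) (by linarith [hγ.1])
  refine ⟨3 * Real.pi / 4, ⟨by linarith [Real.pi_pos], by linarith [Real.pi_pos]⟩,
    fun θ hθ ↦ ⟨C₂ * M + C₁ * M ^ 2, by positivity, ?_⟩⟩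
  intro τ hτ z hz R₁ R₂ hR₁ hR₂ hR
  have hζ := mul_ofReal_mem_scaledDomain hτ hθ hz
  have hz₀ : 0 < ‖z‖ := norm_pos_iff.mpr hz.1
  have hy : ‖z ^ (-(γ : ℂ))‖ = ‖z‖ ^ (-γ) := by rw [← ofReal_neg, norm_cpow_real]
  have e₁ : ‖z‖ ^ (2 - γ) * ‖z‖ ^ (-α) = ‖z‖ ^ (2 - α - γ) := by
    rw [← Real.rpow_add hz₀]; ring_nf
  have e₂ : ‖z‖ ^ (-γ) * ‖z‖ ^ (α + 2) * (‖z‖ ^ (-α)) ^ 2 = ‖z‖ ^ (2 - α - γ) := by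
    rw [sq, ← Real.rpow_add hz₀, ← Real.rpow_add hz₀, ← Real.rpow_add hz₀]; ring_nf
  calc _ ≤ _ := norm_smul_sub_smul_le_of_resolvent_identity hR₁ hR₂ hR
    _ ≤ C₂ * τ ^ 2 * ‖z‖ ^ (2 - γ) * (M * ‖z‖ ^ (-α)) +
        ‖z‖ ^ (-γ) * (C₁ * τ ^ 2 * ‖z‖ ^ (α + 2)) * (M * ‖z‖ ^ (-α)) ^ 2 := by
      rw [hy]
      gcongr
      · exact norm_bdf2_cpow_mul_rho1_sub_le hτ (hnoise _ hζ)
      · exact norm_cpow_sub_bdf2_cpow_le hτ (hres _ hζ)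
    _ = (C₂ * M + C₁ * M ^ 2) * τ ^ 2 * ‖z‖ ^ (2 - α - γ) := by
      linear_combination (C₂ * M * τ ^ 2) * e₁ + (C₁ * M ^ 2 * τ ^ 2) * e₂

theorem bdf2_noise_term_operator_estimate
    {H : Type*} [NormedAddCommGroup H] [InnerProductSpace ℂ H] [CompleteSpace H]
    (α γ : ℝ) (hα : α ∈ Ioo (1 : ℝ) 2) (hγ : γ ∈ Ioo (0 : ℝ) 1) (M : ℝ) (hM : 0 < M) :
    ∃ θ₀ ∈ Ioo (Real.pi / 2) Real.pi, ∀ θ ∈ Ioo (Real.pi / 2) θ₀,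
      ∃ c > (0 : ℝ),
        ∀ τ : ℝ, 0 < τ → ∀ z ∈ Dset τ θ,
          ∀ R₁ R₂ : H →L[ℂ] H,
            ‖R₁‖ ≤ M * ‖z‖ ^ (-α) →
            ‖R₂‖ ≤ M * ‖z‖ ^ (-α) →
            R₂ - R₁ = (z ^ (α : ℂ) - (bdf2 τ (Complex.exp (-z * τ))) ^ (α : ℂ)) •
              (R₂ ∘L R₁) →
            ‖((bdf2 τ (Complex.exp (-z * τ))) ^ (((2 - γ : ℝ)) : ℂ) *
                  rho1 (Complex.exp (-z * τ)) * (τ : ℂ) ^ 2) • R₂ -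
                (z ^ (-(γ : ℂ))) • R₁‖ ≤
              c * τ ^ 2 * ‖z‖ ^ (2 - α - γ) :=
  bdf2_noise_term_operator_estimate_general α γ hα hγ M hM
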